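/- Safety of the inactive feature screening rule IFS (Theorem 8): let α > 0 and β₀ > 0, let w* minimize P(·; α, β₀) over ℝ^p and θ* minimize D(·; α, β₀) over the box [0,1]^n. Let R̂ and L̂ be disjoint subsets of {1, …, n} with [θ*]_i = 0 for all i ∈ R̂ and [θ*]_i = 1 for all i ∈ L̂; set D̂ = R̂ ∪ L̂ and D̂^c = {1, …, n} \ D̂. Suppose c ∈ ℝ^{D̂^c} and r ≥ 0 satisfy ‖[θ*]_{D̂^c} − c‖ ≤ r. Then for every j ∈ {1, …, p}, the inequality (1/n)·(|⟨[x̄^j]_{D̂^c}, c⟩ + ⟨[x̄^j]_{L̂}, 1⟩| + ‖[x̄^j]_{D̂^c}‖·r) ≤ β₀ implies [w*]_j = 0, where ⟨[x̄^j]_{L̂}, 1⟩ denotes the sum of the entries of [x̄^j]_{L̂}. -/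

import Mathlib

open Finset

/-- The smoothed hinge loss. -/
noncomputable def ell (γ t : ℝ) : ℝ :=
  if t < 0 then 0 else if t ≤ γ then t ^ 2 / (2 * γ) else t - γ / 2

/-- Componentwise soft-thresholding operator. -/
noncomputable def softThresh (β u : ℝ) : ℝ :=
  Real.sign u * max (|u| - β) 0

/-- Primal objective P(w; α, β). -/
noncomputable def Pobj {n p : ℕ} (xb : Fin n → Fin p → ℝ) (γ α β : ℝ) (w : Fin p → ℝ) : ℝ :=
  (1 / (n : ℝ)) * ∑ i, ell γ (1 - ∑ j, xb i j * w j)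
    + (α / 2) * ∑ j, w j ^ 2 + β * ∑ j, |w j|

/-- Dual objective D(θ; α, β). -/
noncomputable def Dobj {n p : ℕ} (xb : Fin n → Fin p → ℝ) (γ α β : ℝ) (θ : Fin n → ℝ) : ℝ :=
  (1 / (2 * α)) * ∑ j, softThresh β ((1 / (n : ℝ)) * ∑ i, θ i * xb i j) ^ 2
    + (γ / (2 * (n : ℝ))) * ∑ i, θ i ^ 2 - (1 / (n : ℝ)) * ∑ i, θ i

lemma softThresh_repr (β : ℝ) (hβ : 0 ≤ β) (u : ℝ) :
    softThresh β u = max (u - β) 0 + min (u + β) 0 := by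
  unfold softThresh
  rcases lt_trichotomy u 0 with h | h | h
  · rw [Real.sign_of_neg h, abs_of_neg h]
    rcases le_total (u + β) 0 with h2 | h2
    · rw [max_eq_left (by linarith), max_eq_right (by linarith), min_eq_left h2]; ring
    · rw [max_eq_right (by linarith), min_eq_right h2, max_eq_right (by linarith)]; ring
  · subst h; simp [max_eq_right (by linarith : -β ≤ (0:ℝ)), min_eq_right hβ]
  · rw [Real.sign_of_pos h, abs_of_pos h]
    rcases le_total (u - β) 0 with h2 | h2
    · rw [max_eq_right h2, min_eq_right (by linarith)]; ring
    · rw [max_eq_left h2, min_eq_right (by linarith)]; ring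

lemma softThresh_incr (β : ℝ) (hβ : 0 ≤ β) {a b : ℝ} (hab : a ≤ b) :
    softThresh β a ≤ softThresh β b ∧ softThresh β b - softThresh β a ≤ b - a := by
  rw [softThresh_repr β hβ, softThresh_repr β hβ]
  constructor
  · gcongr
  · rcases le_total (a - β) 0 with h1 | h1 <;> rcases le_total (b - β) 0 with h2 | h2 <;>
      rcases le_total (a + β) 0 with h3 | h3 <;> rcases le_total (b + β) 0 with h4 | h4 <;>
      simp [max_eq_left, max_eq_right, min_eq_left, min_eq_right, h1, h2, h3, h4,
        max_eq_left h1, max_eq_right h1] <;> linarith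

lemma softThresh_lip (β : ℝ) (hβ : 0 ≤ β) (a b : ℝ) :
    |softThresh β b - softThresh β a| ≤ |b - a| := by
  rcases le_total a b with h | h
  · obtain ⟨h1, h2⟩ := softThresh_incr β hβ h
    rw [abs_of_nonneg (by linarith), abs_of_nonneg (by linarith)]; exact h2
  · obtain ⟨h1, h2⟩ := softThresh_incr β hβ h
    rw [abs_of_nonpos (by linarith), abs_of_nonpos (by linarith)]; linarith

lemma softThresh_sq (β : ℝ) (hβ : 0 ≤ β) (u : ℝ) :
    (softThresh β u)^2 = (max (|u| - β) 0)^2 := by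
  unfold softThresh
  rcases lt_trichotomy u 0 with h | h | h
  · rw [Real.sign_of_neg h]; ring
  · subst h; rw [abs_zero, zero_sub, max_eq_right (neg_nonpos.mpr hβ)]; simp
  · rw [Real.sign_of_pos h]; ring

lemma mul_softThresh (β : ℝ) (u : ℝ) :
    u * softThresh β u = |u| * max (|u| - β) 0 := by
  unfold softThresh
  rcases lt_trichotomy u 0 with h | h | h
  · rw [Real.sign_of_neg h, abs_of_neg h]; ring
  · subst h; simp
  · rw [Real.sign_of_pos h, abs_of_pos h]; ring

lemma abs_softThresh (β : ℝ) (hβ : 0 ≤ β) (u : ℝ) :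
    |softThresh β u| = max (|u| - β) 0 := by
  unfold softThresh
  rcases lt_trichotomy u 0 with h | h | h
  all_goals try rw [Real.sign_of_neg h]
  all_goals try rw [Real.sign_of_pos ‹0 < u›]
  · rw [abs_mul, abs_neg, abs_one, one_mul, abs_of_nonneg (le_max_right (|u| - β) 0)]
  · subst h; rw [abs_zero, zero_sub, max_eq_right (neg_nonpos.mpr hβ)]; simp
  · rw [abs_mul, abs_one, one_mul, abs_of_nonneg (le_max_right (|u| - β) 0)]

lemma softThresh_eq_zero (β u : ℝ) (h : |u| ≤ β) : softThresh β u = 0 := by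
  unfold softThresh; rw [max_eq_right (by linarith)]; ring

lemma subgrad_sq (β : ℝ) (hβ : 0 ≤ β) (a b : ℝ) :
    (softThresh β a)^2 + 2 * softThresh β a * (b - a) ≤ (softThresh β b)^2 := by
  set Ma := max (|a| - β) 0 with hMa
  set Mb := max (|b| - β) 0 with hMb
  have hMa0 : 0 ≤ Ma := le_max_right _ _
  have hMb0 : 0 ≤ Mb := le_max_right _ _
  have hMbb : |b| - β ≤ Mb := le_max_left _ _
  rw [softThresh_sq β hβ, softThresh_sq β hβ, ← hMa, ← hMb]
  rcases le_or_gt (|a| - β) 0 with h | h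
  · have : Ma = 0 := max_eq_right h
    rw [show softThresh β a = 0 from softThresh_eq_zero β a (by linarith)]
    nlinarith
  · have hMae : Ma = |a| - β := max_eq_left h.le
    have hsa : softThresh β a * (b - a) ≤ Ma * (|b| - |a|) := by
      unfold softThresh
      rw [← hMa]
      rcases lt_trichotomy a 0 with ha | ha | ha
      · rw [Real.sign_of_neg ha]
        have : -(b-a) ≤ |b| - |a| := by
          rw [abs_of_neg ha]; rcases abs_cases b with ⟨h1,_⟩|⟨h1,_⟩ <;> linarith
        nlinarith
      · subst ha; simp at h; linarith
      · rw [Real.sign_of_pos ha]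
        have : b - a ≤ |b| - |a| := by
          rw [abs_of_pos ha]; rcases abs_cases b with ⟨h1,_⟩|⟨h1,_⟩ <;> linarith
        nlinarith
    nlinarith [sq_nonneg (Mb - Ma)]

lemma smooth_sq (β : ℝ) (hβ : 0 ≤ β) (a h : ℝ) :
    (softThresh β (a + h))^2 ≤ (softThresh β a)^2 + 2 * softThresh β a * h + 2 * h^2 := by
  have h1 := subgrad_sq β hβ (a + h) a
  have h2 := softThresh_lip β hβ a (a + h)
  have h3 : softThresh β (a+h) * h ≤ softThresh β a * h + h^2 := by
    have : (softThresh β (a+h) - softThresh β a) * h ≤ h^2 := by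
      calc (softThresh β (a+h) - softThresh β a) * h ≤ |(softThresh β (a+h) - softThresh β a) * h| := le_abs_self _
        _ = |softThresh β (a+h) - softThresh β a| * |h| := abs_mul _ _
        _ ≤ |a + h - a| * |h| := by gcongr
        _ = h^2 := by rw [show a + h - a = h by ring, ← abs_mul, abs_mul_self]; ring
    linarith
  nlinarith

lemma fenchel_ell (γ t s : ℝ) (hγ : 0 < γ) (hs0 : 0 ≤ s) (hs1 : s ≤ 1) :
    s * t - γ * s^2 / 2 ≤ ell γ t := by
  unfold ell; split_ifs with h1 h2
  · nlinarith [mul_nonneg hs0 hs0]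
  · rw [le_div_iff₀ (by linarith : (0:ℝ) < 2*γ)]
    nlinarith [sq_nonneg (t - γ*s)]
  · push_neg at h1 h2
    nlinarith [mul_nonneg (by linarith : (0:ℝ) ≤ 1 - s) (by nlinarith : (0:ℝ) ≤ 2*t - γ - γ*s)]

lemma ell_exists_eq (γ t : ℝ) (hγ : 0 < γ) :
    ∃ s, 0 ≤ s ∧ s ≤ 1 ∧ ell γ t = s * t - γ * s^2 / 2 := by
  unfold ell; split_ifs with h1 h2
  · exact ⟨0, le_refl _, by norm_num, by ring⟩
  · push_neg at h1
    refine ⟨t / γ, by positivity, by rw [div_le_one hγ]; linarith, ?_⟩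
    field_simp; ring
  · exact ⟨1, by norm_num, le_refl _, by ring⟩

lemma ell_midpoint (γ a b : ℝ) (hγ : 0 < γ) :
    ell γ ((a + b)/2) ≤ (ell γ a + ell γ b)/2 := by
  obtain ⟨s, hs0, hs1, hseq⟩ := ell_exists_eq γ ((a+b)/2) hγ
  have ha := fenchel_ell γ a s hγ hs0 hs1
  have hb := fenchel_ell γ b s hγ hs0 hs1
  rw [hseq]; linarith

lemma fenchel_ell_eq (γ t s : ℝ) (hγ : 0 < γ) (hs0 : 0 ≤ s) (hs1 : s ≤ 1)
    (hVI : ∀ s', 0 ≤ s' → s' ≤ 1 → 0 ≤ (γ * s - t) * (s' - s)) :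
    ell γ t = s * t - γ * s^2 / 2 := by
  have h0 := hVI 0 le_rfl zero_le_one
  have h1 := hVI 1 zero_le_one le_rfl
  rcases eq_or_lt_of_le hs0 with he | hlt
  · -- s = 0 : t ≤ 0
    have hs : s = 0 := he.symm
    subst hs
    have ht : t ≤ 0 := by nlinarith
    unfold ell; split_ifs with ha hb
    · ring
    · have : t = 0 := le_antisymm ht (not_lt.mp ha)
      subst this; field_simp; ring
    · linarith [not_lt.mp ha]
  rcases eq_or_lt_of_le hs1 with he1 | hlt1
  · -- s = 1 : t ≥ γ
    subst he1
    have ht : γ ≤ t := by nlinarith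
    unfold ell; split_ifs with ha hb
    · linarith
    · have : t = γ := le_antisymm hb ht
      subst this; field_simp; ring
    · ring
  · -- interior : γ s = t
    have heq : γ * s = t := by nlinarith
    have ht0 : 0 < t := by nlinarith
    have htγ : t < γ := by nlinarith
    unfold ell; split_ifs with ha hb
    · linarith
    · rw [← heq]; field_simp; ring
    · linarith

lemma fenchel_reg (α β u w : ℝ) (hα : 0 < α) (hβ : 0 ≤ β) :
    u * w - (softThresh β u)^2 / (2*α) ≤ α/2 * w^2 + β * |w| := by
  set M := max (|u| - β) 0 with hM
  have hM0 : 0 ≤ M := le_max_right _ _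
  have hMu : |u| - β ≤ M := le_max_left _ _
  rw [softThresh_sq β hβ, ← hM]
  have huw : u * w ≤ |u| * |w| := by
    calc u * w ≤ |u * w| := le_abs_self _
      _ = |u| * |w| := abs_mul _ _
  have hw0 : 0 ≤ |w| := abs_nonneg w
  have hd : M^2 / (2*α) = M^2 * (2*α)⁻¹ := div_eq_mul_inv _ _
  have hinv : 0 < (2*α)⁻¹ := by positivity
  have key : (α * |w| - M)^2 * (2*α)⁻¹ ≥ 0 := by positivity
  have habs : |w|^2 = w^2 := sq_abs w
  have hexp : ∀ W : ℝ, (α * W - M)^2 * (2*α)⁻¹ = α/2*W^2 - M*W + M^2*(2*α)⁻¹ := by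
    intro W; field_simp; ring
  have hexp2 := hexp |w|
  rw [habs] at hexp2
  nlinarith [mul_nonneg hw0 (sub_nonneg.mpr hMu)]

lemma fenchel_reg_eq (α β u : ℝ) (hα : 0 < α) (hβ : 0 ≤ β) :
    u * (softThresh β u / α) - (softThresh β u)^2 / (2*α)
      = α/2 * (softThresh β u / α)^2 + β * |softThresh β u / α| := by
  set M := max (|u| - β) 0 with hM
  have hM0 : 0 ≤ M := le_max_right _ _
  have key : M * (|u| - β - M) = 0 := by
    rcases le_total (|u| - β) 0 with h | h
    · rw [hM, max_eq_right h]; ring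
    · rw [hM, max_eq_left h]; ring
  have h1 : u * softThresh β u = |u| * M := mul_softThresh β u
  have h2 : (softThresh β u)^2 = M^2 := softThresh_sq β hβ u
  have h3 : |softThresh β u| = M := abs_softThresh β hβ u
  rw [abs_div, h3, abs_of_pos hα, div_pow, h2, ← mul_div_assoc, h1]
  have huM : |u| * M = M^2 + β * M := by nlinarith [key]
  rw [huM]
  field_simp
  ring

lemma eps_limit (A B : ℝ) (hB : 0 ≤ B) (h : ∀ ε : ℝ, 0 < ε → ε ≤ 1 → 0 ≤ ε * A + ε^2 * B) :
    0 ≤ A := by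
  by_contra hA
  push_neg at hA
  rcases eq_or_lt_of_le hB with hB0 | hB0
  · have := h 1 one_pos le_rfl; nlinarith
  · set ε := min 1 (-A / (2*B)) with hε
    have hε0 : 0 < ε := lt_min one_pos (div_pos (by linarith) (by linarith))
    have hε1 : ε ≤ 1 := min_le_left _ _
    have hεA : ε ≤ -A / (2*B) := min_le_right _ _
    rw [le_div_iff₀ (by linarith : (0:ℝ) < 2*B)] at hεA
    have := h ε hε0 hε1
    nlinarith

lemma fubini_id {n p : ℕ} (xb : Fin n → Fin p → ℝ) (θ : Fin n → ℝ) (w : Fin p → ℝ) (cst : ℝ) :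
    ∑ j, (cst * ∑ i, θ i * xb i j) * w j = cst * ∑ i, θ i * ∑ j, xb i j * w j := by
  simp only [Finset.sum_mul, Finset.mul_sum]
  rw [Finset.sum_comm]
  exact Finset.sum_congr rfl fun i _ => Finset.sum_congr rfl fun j _ => by ring

lemma weak_duality {n p : ℕ} (hn : 0 < n) (xb : Fin n → Fin p → ℝ)
    (γ α β : ℝ) (hγ : 0 < γ) (hα : 0 < α) (hβ : 0 ≤ β)
    (w : Fin p → ℝ) (θ : Fin n → ℝ) (hbox : ∀ i, 0 ≤ θ i ∧ θ i ≤ 1) :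
    - Dobj xb γ α β θ ≤ Pobj xb γ α β w := by
  have hn' : (0:ℝ) < n := by exact_mod_cast hn
  unfold Pobj Dobj
  have H1 : ∑ i, (θ i * (1 - ∑ j, xb i j * w j) - γ * (θ i)^2 / 2)
      ≤ ∑ i, ell γ (1 - ∑ j, xb i j * w j) :=
    Finset.sum_le_sum fun i _ => fenchel_ell γ _ _ hγ (hbox i).1 (hbox i).2
  have H2 : ∑ j, (((1/(n:ℝ)) * ∑ i, θ i * xb i j) * w j
      - (softThresh β ((1/(n:ℝ)) * ∑ i, θ i * xb i j))^2 / (2*α))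
      ≤ ∑ j, (α/2 * (w j)^2 + β * |w j|) :=
    Finset.sum_le_sum fun j _ => fenchel_reg α β _ _ hα hβ
  have hfub := fubini_id xb θ w (1/(n:ℝ))
  have idE1 : ∑ i, (θ i * (1 - ∑ j, xb i j * w j) - γ * (θ i)^2 / 2)
      = (∑ i, θ i) - (∑ i, θ i * ∑ j, xb i j * w j) - (γ/2) * ∑ i, (θ i)^2 := by
    rw [Finset.mul_sum, ← Finset.sum_sub_distrib, ← Finset.sum_sub_distrib]
    exact Finset.sum_congr rfl fun i _ => by ring
  have idH2 : ∑ j, (((1/(n:ℝ)) * ∑ i, θ i * xb i j) * w j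
      - (softThresh β ((1/(n:ℝ)) * ∑ i, θ i * xb i j))^2 / (2*α))
      = (∑ j, ((1/(n:ℝ)) * ∑ i, θ i * xb i j) * w j)
        - (1/(2*α)) * ∑ j, (softThresh β ((1/(n:ℝ)) * ∑ i, θ i * xb i j))^2 := by
    rw [Finset.mul_sum, ← Finset.sum_sub_distrib]
    exact Finset.sum_congr rfl fun j _ => by ring
  have idP2 : ∑ j, (α/2 * (w j)^2 + β * |w j|) = α/2 * (∑ j, (w j)^2) + β * ∑ j, |w j| := by
    rw [Finset.mul_sum, Finset.mul_sum, ← Finset.sum_add_distrib]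
  rw [idE1] at H1
  rw [idH2, idP2, hfub] at H2
  set E := ∑ i, ell γ (1 - ∑ j, xb i j * w j)
  set Q := ∑ j, (w j)^2
  set W1 := ∑ j, |w j|
  set T := ∑ i, θ i
  set T2 := ∑ i, (θ i)^2
  set S2 := ∑ j, (softThresh β ((1/(n:ℝ)) * ∑ i, θ i * xb i j))^2
  set X := ∑ i, θ i * ∑ j, xb i j * w j
  have hmul := mul_le_mul_of_nonneg_left H1 (le_of_lt (by positivity : (0:ℝ) < 1/(n:ℝ)))
  have e1 : (1/(n:ℝ)) * (T - X - γ/2 * T2) = (1/(n:ℝ))*T - (1/(n:ℝ))*X - (γ/(2*(n:ℝ)))*T2 := by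
    field_simp
  rw [e1] at hmul
  have e2 : (1/(2*α)) * S2 = S2 / (2*α)⁻¹⁻¹ := by field_simp
  linarith

lemma strong_eq {n p : ℕ} (hn : 0 < n) (xb : Fin n → Fin p → ℝ)
    (γ α β : ℝ) (hγ : 0 < γ) (hα : 0 < α) (hβ : 0 ≤ β) (θ : Fin n → ℝ)
    (hEll : ∀ i, ell γ (1 - ∑ j, xb i j * (softThresh β ((1/(n:ℝ)) * ∑ i', θ i' * xb i' j) / α))
      = θ i * (1 - ∑ j, xb i j * (softThresh β ((1/(n:ℝ)) * ∑ i', θ i' * xb i' j) / α))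
        - γ * (θ i)^2 / 2) :
    Pobj xb γ α β (fun j => softThresh β ((1/(n:ℝ)) * ∑ i, θ i * xb i j) / α)
      = - Dobj xb γ α β θ := by
  have hn' : (0:ℝ) < n := by exact_mod_cast hn
  set v : Fin p → ℝ := fun j => softThresh β ((1/(n:ℝ)) * ∑ i, θ i * xb i j) / α with hv
  unfold Pobj Dobj
  have H1 : ∑ i, ell γ (1 - ∑ j, xb i j * v j)
      = ∑ i, (θ i * (1 - ∑ j, xb i j * v j) - γ * (θ i)^2 / 2) :=
    Finset.sum_congr rfl fun i _ => hEll i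
  have H2 : ∑ j, (((1/(n:ℝ)) * ∑ i, θ i * xb i j) * v j
      - (softThresh β ((1/(n:ℝ)) * ∑ i, θ i * xb i j))^2 / (2*α))
      = ∑ j, (α/2 * (v j)^2 + β * |v j|) :=
    Finset.sum_congr rfl fun j _ => fenchel_reg_eq α β _ hα hβ
  have hfub := fubini_id xb θ v (1/(n:ℝ))
  have idE1 : ∑ i, (θ i * (1 - ∑ j, xb i j * v j) - γ * (θ i)^2 / 2)
      = (∑ i, θ i) - (∑ i, θ i * ∑ j, xb i j * v j) - (γ/2) * ∑ i, (θ i)^2 := by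
    rw [Finset.mul_sum, ← Finset.sum_sub_distrib, ← Finset.sum_sub_distrib]
    exact Finset.sum_congr rfl fun i _ => by ring
  have idH2 : ∑ j, (((1/(n:ℝ)) * ∑ i, θ i * xb i j) * v j
      - (softThresh β ((1/(n:ℝ)) * ∑ i, θ i * xb i j))^2 / (2*α))
      = (∑ j, ((1/(n:ℝ)) * ∑ i, θ i * xb i j) * v j)
        - (1/(2*α)) * ∑ j, (softThresh β ((1/(n:ℝ)) * ∑ i, θ i * xb i j))^2 := by
    rw [Finset.mul_sum, ← Finset.sum_sub_distrib]
    exact Finset.sum_congr rfl fun j _ => by ring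
  have idP2 : ∑ j, (α/2 * (v j)^2 + β * |v j|) = α/2 * (∑ j, (v j)^2) + β * ∑ j, |v j| := by
    rw [Finset.mul_sum, Finset.mul_sum, ← Finset.sum_add_distrib]
  rw [idE1] at H1
  rw [idH2, idP2, hfub] at H2
  set E := ∑ i, ell γ (1 - ∑ j, xb i j * v j)
  set Q := ∑ j, (v j)^2
  set W1 := ∑ j, |v j|
  set T := ∑ i, θ i
  set T2 := ∑ i, (θ i)^2
  set S2 := ∑ j, (softThresh β ((1/(n:ℝ)) * ∑ i, θ i * xb i j))^2
  set X := ∑ i, θ i * ∑ j, xb i j * v j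
  have hmul := congrArg (fun z => (1/(n:ℝ)) * z) H1
  have e1 : (1/(n:ℝ)) * (T - X - γ/2 * T2) = (1/(n:ℝ))*T - (1/(n:ℝ))*X - (γ/(2*(n:ℝ)))*T2 := by
    field_simp
  rw [e1] at hmul
  linarith

lemma sum_update_point {n : ℕ} (f : Fin n → ℝ) (i : Fin n) (c : ℝ) (F : Fin n → ℝ → ℝ) :
    ∑ k, F k ((Function.update f i c) k) = (∑ k, F k (f k)) + (F i c - F i (f i)) := by
  rw [← Finset.sum_erase_add Finset.univ _ (Finset.mem_univ i)]
  conv_rhs => rw [← Finset.sum_erase_add Finset.univ (fun k => F k (f k)) (Finset.mem_univ i)]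
  rw [Function.update_self]
  have h : ∑ k ∈ Finset.univ.erase i, F k (Function.update f i c k)
      = ∑ k ∈ Finset.univ.erase i, F k (f k) :=
    Finset.sum_congr rfl fun k hk => by rw [Function.update_of_ne (Finset.ne_of_mem_erase hk)]
  rw [h]; ring

lemma dual_VI {n p : ℕ} (hn : 0 < n) (xb : Fin n → Fin p → ℝ)
    (γ α β : ℝ) (hγ : 0 < γ) (hα : 0 < α) (hβ : 0 ≤ β)
    (θ : Fin n → ℝ) (hbox : ∀ k, 0 ≤ θ k ∧ θ k ≤ 1)
    (hopt : ∀ θ' : Fin n → ℝ, (∀ k, 0 ≤ θ' k ∧ θ' k ≤ 1) → Dobj xb γ α β θ ≤ Dobj xb γ α β θ')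
    (i : Fin n) (s' : ℝ) (hs0 : 0 ≤ s') (hs1 : s' ≤ 1) :
    0 ≤ (γ * θ i - (1 - ∑ j, xb i j * (softThresh β ((1/(n:ℝ)) * ∑ k, θ k * xb k j) / α)))
        * (s' - θ i) := by
  have hn' : (0:ℝ) < n := by exact_mod_cast hn
  have hnne : (n:ℝ) ≠ 0 := ne_of_gt hn'
  have hαne : α ≠ 0 := ne_of_gt hα
  set SX := ∑ j, softThresh β ((1/(n:ℝ)) * ∑ k, θ k * xb k j) * xb i j with hSX
  set XX := ∑ j, (xb i j)^2 with hXX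
  set A := (s' - θ i) * ((1/(n:ℝ)) * (SX/α + γ * θ i - 1)) with hA
  set B := (s' - θ i)^2 * ((1/(α*(n:ℝ)^2)) * XX + γ/(2*(n:ℝ))) with hB
  have hXX0 : 0 ≤ XX := Finset.sum_nonneg fun j _ => sq_nonneg _
  have hB0 : 0 ≤ B := by
    apply mul_nonneg (sq_nonneg _)
    have : 0 ≤ (1/(α*(n:ℝ)^2)) * XX := mul_nonneg (by positivity) hXX0
    have : 0 ≤ γ/(2*(n:ℝ)) := by positivity
    linarith
  have hkey : ∀ ε : ℝ, 0 < ε → ε ≤ 1 → 0 ≤ ε * A + ε^2 * B := by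
    intro ε hε0 hε1
    set δ := ε * (s' - θ i) with hδ
    set θ' := Function.update θ i (θ i + δ) with hθ'
    have hbox' : ∀ k, 0 ≤ θ' k ∧ θ' k ≤ 1 := by
      intro k
      rcases eq_or_ne k i with rfl | hk
      · rw [hθ', Function.update_self]
        constructor
        · nlinarith [(hbox k).1, mul_nonneg (by linarith : (0:ℝ) ≤ 1 - ε) (hbox k).1,
            mul_nonneg hε0.le hs0]
        · nlinarith [mul_nonneg (by linarith : (0:ℝ) ≤ 1 - ε)
            (by linarith [(hbox k).2] : (0:ℝ) ≤ 1 - θ k),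
            mul_nonneg hε0.le (by linarith : (0:ℝ) ≤ 1 - s')]
      · rw [hθ', Function.update_of_ne hk]; exact hbox k
    have hD := hopt θ' hbox'
    unfold Dobj at hD
    have hsum1 : ∀ j, ∑ k, θ' k * xb k j = (∑ k, θ k * xb k j) + δ * xb i j := by
      intro j
      have h := sum_update_point θ i (θ i + δ) (fun k x => x * xb k j)
      rw [hθ', h]; ring
    have hsum2 : ∑ k, (θ' k)^2 = (∑ k, (θ k)^2) + (2*θ i*δ + δ^2) := by
      have h := sum_update_point θ i (θ i + δ) (fun _ x => x^2)
      rw [hθ', h]; ring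
    have hsum3 : ∑ k, θ' k = (∑ k, θ k) + δ := by
      have h := sum_update_point θ i (θ i + δ) (fun _ x => x)
      rw [hθ', h]; ring
    simp only [hsum1, hsum2, hsum3] at hD
    have harg : ∀ j, (1/(n:ℝ)) * ((∑ k, θ k * xb k j) + δ * xb i j)
        = (1/(n:ℝ)) * (∑ k, θ k * xb k j) + δ * xb i j / (n:ℝ) := by
      intro j; field_simp
    simp only [harg] at hD
    have hSsum : ∑ j, (softThresh β ((1/(n:ℝ)) * (∑ k, θ k * xb k j) + δ * xb i j / (n:ℝ)))^2
        ≤ (∑ j, (softThresh β ((1/(n:ℝ)) * (∑ k, θ k * xb k j)))^2)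
          + ((2*δ/(n:ℝ)) * SX + (2*δ^2/(n:ℝ)^2) * XX) := by
      calc ∑ j, (softThresh β ((1/(n:ℝ)) * (∑ k, θ k * xb k j) + δ * xb i j / (n:ℝ)))^2
          ≤ ∑ j, ((softThresh β ((1/(n:ℝ)) * (∑ k, θ k * xb k j)))^2
            + 2 * softThresh β ((1/(n:ℝ)) * (∑ k, θ k * xb k j)) * (δ * xb i j / (n:ℝ))
            + 2 * (δ * xb i j / (n:ℝ))^2) :=
            Finset.sum_le_sum fun j _ => smooth_sq β hβ _ _
        _ = (∑ j, (softThresh β ((1/(n:ℝ)) * (∑ k, θ k * xb k j)))^2)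
            + ((2*δ/(n:ℝ)) * SX + (2*δ^2/(n:ℝ)^2) * XX) := by
            rw [hSX, hXX, Finset.mul_sum, Finset.mul_sum, ← Finset.sum_add_distrib,
              ← Finset.sum_add_distrib]
            exact Finset.sum_congr rfl fun j _ => by field_simp; ring
    have hmul := mul_le_mul_of_nonneg_left hSsum (by positivity : (0:ℝ) ≤ 1/(2*α))
    have eq1 : ε * A + ε^2 * B
        = (1/(2*α)) * ((2*δ/(n:ℝ)) * SX + (2*δ^2/(n:ℝ)^2) * XX)
          + (γ/(2*(n:ℝ))) * (2*θ i*δ + δ^2) - (1/(n:ℝ)) * δ := by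
      rw [hA, hB, hδ]; field_simp; ring
    rw [eq1]
    have expand1 : (γ/(2*(n:ℝ))) * ((∑ k, (θ k)^2) + (2*θ i*δ + δ^2))
        = (γ/(2*(n:ℝ))) * (∑ k, (θ k)^2) + (γ/(2*(n:ℝ))) * (2*θ i*δ + δ^2) := by ring
    have expand2 : (1/(n:ℝ)) * ((∑ k, θ k) + δ) = (1/(n:ℝ)) * (∑ k, θ k) + (1/(n:ℝ)) * δ := by
      ring
    rw [expand1, expand2] at hD
    have expand3 : (1/(2*α)) * ((∑ j, (softThresh β ((1/(n:ℝ)) * (∑ k, θ k * xb k j)))^2)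
        + ((2*δ/(n:ℝ)) * SX + (2*δ^2/(n:ℝ)^2) * XX))
        = (1/(2*α)) * (∑ j, (softThresh β ((1/(n:ℝ)) * (∑ k, θ k * xb k j)))^2)
          + (1/(2*α)) * ((2*δ/(n:ℝ)) * SX + (2*δ^2/(n:ℝ)^2) * XX) := by ring
    rw [expand3] at hmul
    linarith
  have h0A := eps_limit A B hB0 hkey
  rw [hA] at h0A
  have hv : ∑ j, xb i j * (softThresh β ((1/(n:ℝ)) * ∑ k, θ k * xb k j) / α) = SX / α := by
    rw [hSX, Finset.sum_div]
    exact Finset.sum_congr rfl fun j _ => by ring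
  rw [hv]
  by_contra hneg
  push_neg at hneg
  have hh : (s' - θ i) * ((1/(n:ℝ)) * (SX/α + γ * θ i - 1))
      = (1/(n:ℝ)) * ((γ * θ i - (1 - SX / α)) * (s' - θ i)) := by ring
  rw [hh] at h0A
  nlinarith [mul_neg_of_pos_of_neg (by positivity : (0:ℝ) < 1/(n:ℝ)) hneg]

lemma primal_midpoint {n p : ℕ} (hn : 0 < n) (xb : Fin n → Fin p → ℝ)
    (γ α β : ℝ) (hγ : 0 < γ) (hα : 0 < α) (hβ : 0 ≤ β) (w v : Fin p → ℝ) :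
    Pobj xb γ α β (fun j => (w j + v j)/2)
      ≤ (Pobj xb γ α β w + Pobj xb γ α β v)/2 - (α/8) * ∑ j, (w j - v j)^2 := by
  have hn' : (0:ℝ) < n := by exact_mod_cast hn
  unfold Pobj
  have hmid : ∀ i : Fin n, (1 : ℝ) - ∑ j, xb i j * ((w j + v j)/2)
      = ((1 - ∑ j, xb i j * w j) + (1 - ∑ j, xb i j * v j))/2 := by
    intro i
    have h : ∑ j, xb i j * ((w j + v j)/2)
        = (∑ j, (xb i j * w j) + ∑ j, (xb i j * v j))/2 := by
      rw [← Finset.sum_add_distrib, Finset.sum_div]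
      exact Finset.sum_congr rfl fun j _ => by ring
    rw [h]; ring
  have hell : ∑ i, ell γ (1 - ∑ j, xb i j * ((w j + v j)/2))
      ≤ ((∑ i, ell γ (1 - ∑ j, xb i j * w j)) + ∑ i, ell γ (1 - ∑ j, xb i j * v j))/2 := by
    calc ∑ i, ell γ (1 - ∑ j, xb i j * ((w j + v j)/2))
        ≤ ∑ i, (ell γ (1 - ∑ j, xb i j * w j) + ell γ (1 - ∑ j, xb i j * v j))/2 :=
          Finset.sum_le_sum fun i _ => by rw [hmid i]; exact ell_midpoint γ _ _ hγ
      _ = ((∑ i, ell γ (1 - ∑ j, xb i j * w j)) + ∑ i, ell γ (1 - ∑ j, xb i j * v j))/2 := by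
          rw [← Finset.sum_add_distrib, Finset.sum_div]
  have hquad : ∑ j, ((w j + v j)/2)^2
      = ((∑ j, (w j)^2) + ∑ j, (v j)^2)/2 - (1/4) * ∑ j, (w j - v j)^2 := by
    rw [← Finset.sum_add_distrib, Finset.sum_div, Finset.mul_sum, ← Finset.sum_sub_distrib]
    exact Finset.sum_congr rfl fun j _ => by ring
  have habs : ∑ j, |(w j + v j)/2| ≤ ((∑ j, |w j|) + ∑ j, |v j|)/2 := by
    calc ∑ j, |(w j + v j)/2| ≤ ∑ j, (|w j| + |v j|)/2 :=
          Finset.sum_le_sum fun j _ => by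
            rw [abs_div, abs_of_pos (by norm_num : (0:ℝ) < 2)]
            exact div_le_div_of_nonneg_right (abs_add_le _ _) (by norm_num) |>.trans_eq rfl
      _ = _ := by rw [← Finset.sum_add_distrib, Finset.sum_div]
  have hell' := mul_le_mul_of_nonneg_left hell (le_of_lt (by positivity : (0:ℝ) < 1/(n:ℝ)))
  have hquad' := congrArg (fun z => (α/2) * z) hquad
  have habs' := mul_le_mul_of_nonneg_left habs hβ
  set E1 := ∑ i, ell γ (1 - ∑ j, xb i j * w j)
  set E2 := ∑ i, ell γ (1 - ∑ j, xb i j * v j)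
  set Em := ∑ i, ell γ (1 - ∑ j, xb i j * ((w j + v j)/2))
  set Q1 := ∑ j, (w j)^2
  set Q2 := ∑ j, (v j)^2
  set Qm := ∑ j, ((w j + v j)/2)^2
  set W1 := ∑ j, |w j|
  set W2 := ∑ j, |v j|
  set Wm := ∑ j, |(w j + v j)/2|
  set DQ := ∑ j, (w j - v j)^2
  nlinarith [hell', hquad', habs']

lemma abs_sum_le_sqrt {m : ℕ} (s : Finset (Fin m)) (f g : Fin m → ℝ) :
    |∑ i ∈ s, f i * g i| ≤ Real.sqrt (∑ i ∈ s, f i ^ 2) * Real.sqrt (∑ i ∈ s, g i ^ 2) := by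
  rw [abs_le]
  constructor
  · have h := Real.sum_mul_le_sqrt_mul_sqrt s (fun i => -f i) g
    have e1 : ∑ i ∈ s, (fun i => -f i) i * g i = -∑ i ∈ s, f i * g i := by
      rw [← Finset.sum_neg_distrib]; exact Finset.sum_congr rfl fun i _ => by ring
    have e2 : ∑ i ∈ s, ((fun i => -f i) i) ^ 2 = ∑ i ∈ s, f i ^ 2 :=
      Finset.sum_congr rfl fun i _ => by ring
    rw [e1, e2] at h
    linarith
  · exact Real.sum_mul_le_sqrt_mul_sqrt s f g


theorem IFS_safe {n p : ℕ} (hn : 0 < n) (hp : 0 < p)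
    (xb : Fin n → Fin p → ℝ) (γ : ℝ) (hγ0 : 0 < γ) (hγ1 : γ < 1)
    (α β₀ : ℝ) (hα : 0 < α) (hβ₀ : 0 < β₀)
    (wstar : Fin p → ℝ) (θstar : Fin n → ℝ)
    (hw : ∀ w, Pobj xb γ α β₀ wstar ≤ Pobj xb γ α β₀ w)
    (hθbox : ∀ i, 0 ≤ θstar i ∧ θstar i ≤ 1)
    (hθ : ∀ θ : Fin n → ℝ, (∀ i, 0 ≤ θ i ∧ θ i ≤ 1) →
      Dobj xb γ α β₀ θstar ≤ Dobj xb γ α β₀ θ)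
    (R L : Finset (Fin n)) (hRL : Disjoint R L)
    (hR : ∀ i ∈ R, θstar i = 0) (hL : ∀ i ∈ L, θstar i = 1)
    (c : Fin n → ℝ) (r : ℝ) (hr : 0 ≤ r)
    (hball : Real.sqrt (∑ i ∈ (R ∪ L)ᶜ, (θstar i - c i) ^ 2) ≤ r) :
    ∀ j, (1 / (n : ℝ)) * (|∑ i ∈ (R ∪ L)ᶜ, xb i j * c i + ∑ i ∈ L, xb i j|
        + Real.sqrt (∑ i ∈ (R ∪ L)ᶜ, xb i j ^ 2) * r) ≤ β₀ →
      wstar j = 0 := by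
  intro j hj
  have hn' : (0:ℝ) < n := by exact_mod_cast hn
  have hEll : ∀ i, ell γ (1 - ∑ j', xb i j'
        * (softThresh β₀ ((1/(n:ℝ)) * ∑ i', θstar i' * xb i' j') / α))
      = θstar i * (1 - ∑ j', xb i j'
        * (softThresh β₀ ((1/(n:ℝ)) * ∑ i', θstar i' * xb i' j') / α))
        - γ * (θstar i)^2 / 2 := by
    intro i
    exact fenchel_ell_eq γ _ _ hγ0 (hθbox i).1 (hθbox i).2
      (fun s' h0 h1 => dual_VI hn xb γ α β₀ hγ0 hα hβ₀.le θstar hθbox hθ i s' h0 h1)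
  have hPeq := strong_eq hn xb γ α β₀ hγ0 hα hβ₀.le θstar hEll
  have hwd := weak_duality hn xb γ α β₀ hγ0 hα hβ₀.le wstar θstar hθbox
  set v : Fin p → ℝ := fun j' => softThresh β₀ ((1/(n:ℝ)) * ∑ i, θstar i * xb i j') / α with hv
  have hwv : Pobj xb γ α β₀ v = Pobj xb γ α β₀ wstar := le_antisymm (by rw [hPeq]; exact hwd) (hw v)
  have hmid := primal_midpoint hn xb γ α β₀ hγ0 hα hβ₀.le wstar v
  have hwm := hw (fun j' => (wstar j' + v j')/2)
  have hsum0 : ∑ j', (wstar j' - v j')^2 ≤ 0 := by nlinarith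
  have hsum : ∑ j', (wstar j' - v j')^2 = 0 :=
    le_antisymm hsum0 (Finset.sum_nonneg fun j' _ => sq_nonneg _)
  have hjz : (wstar j - v j)^2 = 0 :=
    (Finset.sum_eq_zero_iff_of_nonneg (fun j' _ => sq_nonneg _)).mp hsum j (Finset.mem_univ j)
  have hwvj : wstar j = v j := by nlinarith [sq_nonneg (wstar j - v j)]
  -- now bound |u j| ≤ β₀
  have hsplit : ∑ i, θstar i * xb i j
      = (∑ i ∈ (R ∪ L)ᶜ, xb i j * c i + ∑ i ∈ L, xb i j)
        + ∑ i ∈ (R ∪ L)ᶜ, (θstar i - c i) * xb i j := by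
    rw [← Finset.sum_add_sum_compl (R ∪ L) (fun i => θstar i * xb i j), Finset.sum_union hRL]
    have hRz : ∑ i ∈ R, θstar i * xb i j = 0 :=
      Finset.sum_eq_zero fun i hi => by rw [hR i hi]; ring
    have hLz : ∑ i ∈ L, θstar i * xb i j = ∑ i ∈ L, xb i j :=
      Finset.sum_congr rfl fun i hi => by rw [hL i hi]; ring
    have hCz : ∑ i ∈ (R ∪ L)ᶜ, θstar i * xb i j
        = ∑ i ∈ (R ∪ L)ᶜ, xb i j * c i + ∑ i ∈ (R ∪ L)ᶜ, (θstar i - c i) * xb i j := by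
      rw [← Finset.sum_add_distrib]
      exact Finset.sum_congr rfl fun i _ => by ring
    rw [hRz, hLz, hCz]; ring
  have hcs := abs_sum_le_sqrt ((R ∪ L)ᶜ) (fun i => θstar i - c i) (fun i => xb i j)
  have hsq2 : (0:ℝ) ≤ Real.sqrt (∑ i ∈ (R ∪ L)ᶜ, xb i j ^ 2) := Real.sqrt_nonneg _
  have hcs2 : |∑ i ∈ (R ∪ L)ᶜ, (θstar i - c i) * xb i j|
      ≤ Real.sqrt (∑ i ∈ (R ∪ L)ᶜ, xb i j ^ 2) * r := by
    calc |∑ i ∈ (R ∪ L)ᶜ, (θstar i - c i) * xb i j|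
        ≤ Real.sqrt (∑ i ∈ (R ∪ L)ᶜ, (θstar i - c i) ^ 2)
          * Real.sqrt (∑ i ∈ (R ∪ L)ᶜ, xb i j ^ 2) := hcs
      _ ≤ r * Real.sqrt (∑ i ∈ (R ∪ L)ᶜ, xb i j ^ 2) :=
          mul_le_mul_of_nonneg_right hball hsq2
      _ = Real.sqrt (∑ i ∈ (R ∪ L)ᶜ, xb i j ^ 2) * r := by ring
  have hub : |(1/(n:ℝ)) * ∑ i, θstar i * xb i j| ≤ β₀ := by
    rw [abs_mul, abs_of_pos (by positivity : (0:ℝ) < 1/(n:ℝ)), hsplit]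
    calc (1/(n:ℝ)) * |(∑ i ∈ (R ∪ L)ᶜ, xb i j * c i + ∑ i ∈ L, xb i j)
          + ∑ i ∈ (R ∪ L)ᶜ, (θstar i - c i) * xb i j|
        ≤ (1/(n:ℝ)) * (|∑ i ∈ (R ∪ L)ᶜ, xb i j * c i + ∑ i ∈ L, xb i j|
          + Real.sqrt (∑ i ∈ (R ∪ L)ᶜ, xb i j ^ 2) * r) := by
          apply mul_le_mul_of_nonneg_left _ (by positivity : (0:ℝ) ≤ 1/(n:ℝ))
          calc |(∑ i ∈ (R ∪ L)ᶜ, xb i j * c i + ∑ i ∈ L, xb i j)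
                + ∑ i ∈ (R ∪ L)ᶜ, (θstar i - c i) * xb i j|
              ≤ |∑ i ∈ (R ∪ L)ᶜ, xb i j * c i + ∑ i ∈ L, xb i j|
                + |∑ i ∈ (R ∪ L)ᶜ, (θstar i - c i) * xb i j| := abs_add_le _ _
            _ ≤ _ := by linarith
      _ ≤ β₀ := hj
  rw [hwvj, hv]
  simp only []
  rw [softThresh_eq_zero β₀ _ hub, zero_div]
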